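/- Let p be a prime and suppose 0 ≤ j ≤ k with 1 ≤ k+j < p. Then for all t ∈ F_p, b_{k,j}(t) = Σ_{α ∈ S_{k-1,t}} t·π(α)·σ_j(α ∪ {t}) equals (-1)^{k+1}·C(k,j)·t^{k+j}, where C(k,j) is the binomial coefficient taken modulo p. -/

import Mathlib

/-! Write `d_{m,i}(S) = Σ_{α ⊆ S, |α| = m} π(α) σ_i(α)`. Over a whole finite field `F` of order `q`,
`α ↦ c α` permutes the `m`-subsets and multiplies each summand by `c^(m+i)`, so `d_{m,i}(F) = 0`
as soon as some unit has `c^(m+i) ≠ 1`, i.e. for `0 < m + i < q - 1`. Splitting the subsets of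
`F = insert t S`, `S = F \ {t}`, by whether they contain `t` gives
`d_{m+1,i}(F) = d_{m+1,i}(S) + t d_{m,i}(S) + t² d_{m,i-1}(S)`. Induction on `m` with Pascal's
rule then yields `d_{m,i}(S) = (-1)^m C(m,i) t^(m+i)`, and `b_{k,j}(t)` is the part of
`d_{k,j}(F)` coming from the subsets that contain `t`. -/

open Finset

/-- `π(α)`: the product of the elements of a finite subset of `ZMod p`. -/
def piProd {p : ℕ} (α : Finset (ZMod p)) : ZMod p := ∏ x ∈ α, x

/-- `σ_j(α)`: the j-th elementary symmetric polynomial evaluated at the elements of `α`. -/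
def esym {p : ℕ} (j : ℕ) (α : Finset (ZMod p)) : ZMod p :=
  ∑ β ∈ α.powersetCard j, ∏ x ∈ β, x

/-- `b_{k,j}(t) = Σ_{α ∈ S_{k-1,t}} t·π(α)·σ_j(α ∪ {t})`, where `S_{k-1,t}` is the set of
(k-1)-element subsets of `F_p` not containing `t`. -/
def bkj (p : ℕ) [NeZero p] (k j : ℕ) (t : ZMod p) : ZMod p :=
  ∑ α ∈ (Finset.univ.erase t).powersetCard (k - 1),
    t * piProd α * esym j (insert t α)

/-- `d_{k,j} = Σ_{α ∈ S_k} π(α)·σ_j(α)`, summing over all k-element subsets of `F_p`. -/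
def dkj (p : ℕ) [NeZero p] (k j : ℕ) : ZMod p :=
  ∑ α ∈ (Finset.univ : Finset (ZMod p)).powersetCard k, piProd α * esym j α

theorem Multiset.esymm_cons_succ {R : Type*} [CommSemiring R] (a : R) (s : Multiset R) (i : ℕ) :
    (a ::ₘ s).esymm (i + 1) = s.esymm (i + 1) + a * s.esymm i := by
  simp only [Multiset.esymm, Multiset.powersetCard_cons, Multiset.map_add, Multiset.sum_add,
    Multiset.map_map, Function.comp_def, Multiset.prod_cons, Multiset.sum_map_mul_left]

theorem Finset.sum_powersetCard_succ_insert {α M : Type*} [DecidableEq α] [AddCommMonoid M]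
    {t : α} {S : Finset α} (ht : t ∉ S) (n : ℕ) (f : Finset α → M) :
    ∑ β ∈ (insert t S).powersetCard (n + 1), f β
      = ∑ β ∈ S.powersetCard (n + 1), f β + ∑ β ∈ S.powersetCard n, f (insert t β) := by
  have hnot : ∀ β ∈ S.powersetCard n, t ∉ β := fun β hβ h =>
    ht ((mem_powersetCard.1 hβ).1 h)
  rw [powersetCard_succ_insert ht, sum_union, sum_image]
  · intro β₁ h₁ β₂ h₂ h
    rw [← erase_insert (hnot β₁ h₁), ← erase_insert (hnot β₂ h₂), h]
  · refine disjoint_left.2 fun β hβ hβ' => ?_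
    obtain ⟨γ, -, rfl⟩ := mem_image.1 hβ'
    exact ht ((mem_powersetCard.1 hβ).1 (mem_insert_self t γ))

theorem Finset.sum_powersetCard_univ_eq_zero_of_homogeneous {K : Type*} [Field K] [Fintype K]
    {f : Finset K → K} {m n : ℕ} (hn₀ : n ≠ 0) (hn : n + 1 < Fintype.card K)
    (hf : ∀ (c : Kˣ), ∀ α ∈ (univ : Finset K).powersetCard m,
      f (α.map c.mulLeft.toEmbedding) = c ^ n * f α) :
    ∑ α ∈ (univ : Finset K).powersetCard m, f α = 0 := by
  obtain ⟨c, hc⟩ := exists_pow_ne_one_of_isCyclic (G := Kˣ) hn₀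
    (by rw [Nat.card_units, Nat.card_eq_fintype_card]; omega)
  have hcK : (c : K) ^ n ≠ 1 := by rw [← Units.val_pow_eq_pow_val, Ne, Units.val_eq_one]; exact hc
  have hscale : ∑ α ∈ (univ : Finset K).powersetCard m, f α
      = (c : K) ^ n * ∑ α ∈ (univ : Finset K).powersetCard m, f α := by
    calc ∑ α ∈ (univ : Finset K).powersetCard m, f α
        = ∑ α ∈ (univ.map c.mulLeft.toEmbedding).powersetCard m, f α := by rw [map_univ_equiv]
      _ = ∑ α ∈ (univ : Finset K).powersetCard m, f (α.map c.mulLeft.toEmbedding) := by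
          rw [powersetCard_map, sum_map]; rfl
      _ = _ := by rw [sum_congr rfl (hf c), mul_sum]
  have h := sub_eq_zero.2 hscale
  rw [← one_sub_mul, mul_eq_zero] at h
  exact h.resolve_left (sub_ne_zero.2 hcK.symm)

section CommRing

variable {R : Type*} [CommRing R] [DecidableEq R]

/-- The paper's `d_{m,i}`, with the `m`-subsets of `F_p` replaced by those of `S`. -/
def prodEsymmSum (S : Finset R) (m i : ℕ) : R :=
  ∑ α ∈ S.powersetCard m, (∏ x ∈ α, x) * α.val.esymm i

def insertProdEsymmSum (S : Finset R) (t : R) (m i : ℕ) : R :=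
  ∑ α ∈ S.powersetCard m, (∏ x ∈ insert t α, x) * (insert t α).val.esymm i

theorem prodEsymmSum_insert {S : Finset R} {t : R} (ht : t ∉ S) (m i : ℕ) :
    prodEsymmSum (insert t S) (m + 1) i = prodEsymmSum S (m + 1) i + insertProdEsymmSum S t m i :=
  sum_powersetCard_succ_insert ht m _

theorem insertProdEsymmSum_zero {S : Finset R} {t : R} (ht : t ∉ S) (m : ℕ) :
    insertProdEsymmSum S t m 0 = t * prodEsymmSum S m 0 := by
  rw [insertProdEsymmSum, prodEsymmSum, mul_sum]
  refine sum_congr rfl fun α hα => ?_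
  rw [prod_insert fun h => ht ((mem_powersetCard.1 hα).1 h)]
  simp only [Multiset.esymm, Multiset.powersetCard_zero_left, Multiset.map_singleton,
    Multiset.prod_zero, Multiset.sum_singleton, mul_one]

theorem insertProdEsymmSum_succ {S : Finset R} {t : R} (ht : t ∉ S) (m i : ℕ) :
    insertProdEsymmSum S t m (i + 1)
      = t * prodEsymmSum S m (i + 1) + t ^ 2 * prodEsymmSum S m i := by
  rw [insertProdEsymmSum, prodEsymmSum, prodEsymmSum, mul_sum, mul_sum, ← sum_add_distrib]
  refine sum_congr rfl fun α hα => ?_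
  have htα : t ∉ α := fun h => ht ((mem_powersetCard.1 hα).1 h)
  rw [prod_insert htα, insert_val_of_notMem htα, Multiset.esymm_cons_succ]
  ring

theorem insertProdEsymmSum_eq_of_prodEsymmSum {S : Finset R} {t : R} (ht : t ∉ S) {m i : ℕ}
    (hS : ∀ i' ≤ i, prodEsymmSum S m i' = (-1) ^ m * m.choose i' * t ^ (m + i')) :
    insertProdEsymmSum S t m i = (-1) ^ m * (m + 1).choose i * t ^ (m + 1 + i) := by
  cases i with
  | zero =>
    rw [insertProdEsymmSum_zero ht, hS 0 le_rfl]
    simp only [Nat.choose_zero_right, Nat.cast_one]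
    ring
  | succ i =>
    rw [insertProdEsymmSum_succ ht, hS (i + 1) le_rfl, hS i (Nat.le_succ i),
      Nat.choose_succ_succ', Nat.cast_add]
    ring

end CommRing

section FiniteField

variable {K : Type*} [Field K] [Fintype K]

theorem prodEsymmSum_univ_eq_zero {m i : ℕ} (h₀ : m + i ≠ 0) (hq : m + i + 1 < Fintype.card K) :
    prodEsymmSum (univ : Finset K) m i = 0 := by
  refine sum_powersetCard_univ_eq_zero_of_homogeneous h₀ hq fun c α hα => ?_
  simp only [prod_map, map_val, Equiv.coe_toEmbedding, Units.mulLeft_apply]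
  have hesymm := Multiset.pow_smul_esymm (c : K) i α.val
  simp only [smul_eq_mul] at hesymm
  rw [prod_mul_distrib, prod_const, (mem_powersetCard.1 hα).2, ← hesymm]
  ring

theorem prodEsymmSum_univ_erase [DecidableEq K] (t : K) {m i : ℕ}
    (hq : m + i + 2 ≤ Fintype.card K) :
    prodEsymmSum (univ.erase t) m i = (-1) ^ m * m.choose i * t ^ (m + i) := by
  induction m generalizing i with
  | zero =>
    cases i <;> simp [prodEsymmSum, Multiset.esymm, Multiset.powersetCard_zero_right]
  | succ m ih =>
    have hsplit := prodEsymmSum_insert (notMem_erase t univ) m i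
    rw [insert_erase (mem_univ t), prodEsymmSum_univ_eq_zero (by omega) (by omega),
      insertProdEsymmSum_eq_of_prodEsymmSum (notMem_erase t univ) fun i' hi' => ih (by omega)]
      at hsplit
    linear_combination -hsplit

end FiniteField

theorem bkj_eq_insertProdEsymmSum (p : ℕ) [NeZero p] (k j : ℕ) (t : ZMod p) :
    bkj p k j t = insertProdEsymmSum (univ.erase t) t (k - 1) j := by
  refine sum_congr rfl fun α hα => ?_
  rw [piProd, esym, prod_insert fun h => notMem_erase t univ ((mem_powersetCard.1 hα).1 h),
    ← Multiset.map_id (insert t α).val, esymm_map_val]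
  rfl

/-- Lemma 2.5 (first part): for 0 <= j <= k with 1 <= k+j < p,
b_{k,j}(t) = (-1)^(k+1) * C(k,j) * t^(k+j). -/
theorem bkj_eq (p : ℕ) [Fact p.Prime] (k j : ℕ) (hjk : j ≤ k)
    (h1 : 1 ≤ k + j) (h2 : k + j < p) (t : ZMod p) :
    bkj p k j t = (-1 : ZMod p) ^ (k + 1) * (k.choose j : ZMod p) * t ^ (k + j) := by
  obtain ⟨m, rfl⟩ : ∃ m, k = m + 1 := ⟨k - 1, by omega⟩
  have hq : Fintype.card (ZMod p) = p := ZMod.card p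
  rw [bkj_eq_insertProdEsymmSum, Nat.add_sub_cancel, insertProdEsymmSum_eq_of_prodEsymmSum
    (notMem_erase t univ) fun i hi => prodEsymmSum_univ_erase t (by omega)]
  ring
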